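/- arXiv:1708.04340 — 5 statements merged into one kernel-verified Lean document; each statement's English description precedes it below -/
import Mathlib

section
/- Let P be a d-dimensional lattice polytope in M_ℝ with vertex set V = {v_1,...,v_n}. Then for any integer k ≥ n-1, every lattice point of (k+1)P can be written as v + u where v ∈ V and u is a lattice point of kP; that is, (k+1)P ∩ M = V + (kP ∩ M). -/
open Finset Pointwise

noncomputable section

/-- Lattice points: `ZL N = ℤ^N`. -/
abbrev ZL (N : ℕ) := Fin N → ℤ

/-- Embedding of the lattice into `ℝ^N`. -/
def toR {N : ℕ} (x : ZL N) : Fin N → ℝ := fun i => (x i : ℝ)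

/-- The lattice polytope spanned by a finite set `V` of lattice points. -/
def poly {N : ℕ} (V : Finset (ZL N)) : Set (Fin N → ℝ) :=
  convexHull ℝ (toR '' (V : Set (ZL N)))

/-- The lattice points of the dilate `k • P`. -/
def latPts {N : ℕ} (V : Finset (ZL N)) (k : ℕ) : Set (ZL N) :=
  {x | toR x ∈ (k : ℝ) • poly V}

/-- `P` is `k`-normal: every lattice point of `kP` is a sum of `k` lattice points of `P`. -/
def kNormal {N : ℕ} (V : Finset (ZL N)) (k : ℕ) : Prop :=
  ∀ x ∈ latPts V k, ∃ f : Fin k → ZL N, (∀ i, f i ∈ latPts V 1) ∧ ∑ i, f i = x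

/-- `P` is normal. -/
def NormalPoly {N : ℕ} (V : Finset (ZL N)) : Prop := ∀ k, 1 ≤ k → kNormal V k

/-- The set of which `d_P` is the least element. -/
def dSet {N : ℕ} (V : Finset (ZL N)) : Set ℕ :=
  {n | 0 < n ∧ ∀ k ≥ n, latPts V (k + 1) = latPts V 1 + latPts V k}

/-- The set of which the `k`-normality threshold `k_P` is the least element. -/
def kSet {N : ℕ} (V : Finset (ZL N)) : Set ℕ :=
  {K | 0 < K ∧ ∀ k ≥ K, kNormal V k}

/-- The set of which `ν_P` is the least element. -/
def nuSet {N : ℕ} (V : Finset (ZL N)) : Set ℕ :=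
  {n | 0 < n ∧ ∀ k ≥ n, latPts V (k + 1) = (V : Set (ZL N)) + latPts V k}

/-- `v` is a vertex of `P`. -/
def IsVertex {N : ℕ} (V : Finset (ZL N)) (v : ZL N) : Prop :=
  v ∈ V ∧ toR v ∈ Set.extremePoints ℝ (poly V)

/-- `P` is very ample: for every vertex `v`, every lattice point of the cone
`ℝ_{≥0}(P - v)` is a finite sum of elements `w - v` with `w ∈ P ∩ M`. -/
def VeryAmple {N : ℕ} (V : Finset (ZL N)) : Prop :=
  ∀ v, IsVertex V v → ∀ u : ZL N,
    (∃ c : ℝ, 0 ≤ c ∧ ∃ p ∈ poly V, toR u = c • (p - toR v)) →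
    ∃ (m : ℕ) (w : Fin m → ZL N), (∀ i, w i ∈ latPts V 1) ∧ u = ∑ i, (w i - v)

/-- The set of numbers `m` such that `x - d_P v` is a sum of `m` elements of `(P ∩ M) - v`;
`σ(x, d_P v)` is its least element. -/
def sigmaSet {N : ℕ} (V : Finset (ZL N)) (dP : ℕ) (x v : ZL N) : Set ℕ :=
  {m | ∃ w : Fin m → ZL N, (∀ i, w i ∈ latPts V 1) ∧ x - dP • v = ∑ i, (w i - v)}

/-- The set of all values `σ(x, d_P v)`; `m_P` is its greatest element. -/
def mSet {N : ℕ} (V : Finset (ZL N)) (dP : ℕ) : Set ℕ :=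
  {s | ∃ x ∈ latPts V dP, ∃ v, IsVertex V v ∧ IsLeast (sigmaSet V dP x v) s}

end

lemma sum_weight_mem_smul_convexHull {N : ℕ} (s : Finset (Fin N → ℝ)) (hs : s.Nonempty)
    (u : (Fin N → ℝ) → ℝ) (hu : ∀ y ∈ s, 0 ≤ u y) (c : ℝ) (hc : ∑ y ∈ s, u y = c) :
    ∑ y ∈ s, u y • y ∈ c • convexHull ℝ (s : Set (Fin N → ℝ)) := by
  rcases eq_or_lt_of_le (by rw [← hc]; exact Finset.sum_nonneg hu : (0:ℝ) ≤ c) with h0 | hpos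
  · have hz : ∀ y ∈ s, u y = 0 := by
      intro y hy
      exact (Finset.sum_eq_zero_iff_of_nonneg hu).mp (by rw [hc, ← h0]) y hy
    have : ∑ y ∈ s, u y • y = 0 := Finset.sum_eq_zero fun y hy => by rw [hz y hy, zero_smul]
    rw [this, ← h0]
    have hne : (convexHull ℝ (s : Set (Fin N → ℝ))).Nonempty :=
      ⟨_, subset_convexHull ℝ _ (hs.choose_spec : hs.choose ∈ (s : Set (Fin N → ℝ)))⟩
    rw [Set.zero_smul_set hne]
    exact rfl
  · have hmem : s.centerMass u id ∈ convexHull ℝ (s : Set (Fin N → ℝ)) :=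
      s.centerMass_id_mem_convexHull hu (by rwa [hc])
    have : c • s.centerMass u id = ∑ y ∈ s, u y • y := by
      rw [Finset.centerMass, hc, smul_smul, mul_inv_cancel₀ (ne_of_gt hpos), one_smul]
      simp
    rw [← this]
    exact Set.smul_mem_smul_set hmem

lemma toR_sub {N : ℕ} (x v : ZL N) : toR (x - v) = toR x - toR v := by
  funext i; simp only [toR, Pi.sub_apply]; push_cast; ring

lemma toR_add {N : ℕ} (x v : ZL N) : toR (x + v) = toR x + toR v := by
  funext i; simp only [toR, Pi.add_apply]; push_cast; ring

/-- For a `d`-dimensional lattice polytope `P` with vertex set `V` of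
cardinality `n`, for every `k ≥ n - 1` one has `(k+1)P ∩ M = V + (kP ∩ M)`. -/
theorem stmt0 {N d : ℕ} (V : Finset (ZL N))
    (hvert : ∀ v ∈ V, toR v ∈ Set.extremePoints ℝ (poly V))
    (hdim : Module.finrank ℝ ↥(vectorSpan ℝ (poly V)) = d) :
    ∀ k : ℕ, V.card - 1 ≤ k →
      latPts V (k + 1) = (V : Set (ZL N)) + latPts V k := by
  classical
  intro k hk
  have hkV : (V.card : ℝ) ≤ (k : ℝ) + 1 := by exact_mod_cast (by omega : V.card ≤ k + 1)
  have hcast : ((k + 1 : ℕ) : ℝ) = (k : ℝ) + 1 := by push_cast; ring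
  ext x
  simp only [latPts, Set.mem_setOf_eq, Set.mem_add]
  constructor
  · intro hx
    rw [hcast] at hx
    obtain ⟨p, hp, hxp⟩ := Set.mem_smul_set.mp hx
    set s : Finset (Fin N → ℝ) := V.image toR with hsdef
    have hpolys : poly V = convexHull ℝ (s : Set (Fin N → ℝ)) := by
      rw [poly, hsdef, Finset.coe_image]
    rw [hpolys] at hp
    obtain ⟨w, hw0, hw1, hwp⟩ := Finset.mem_convexHull'.mp hp
    have hsne : s.Nonempty := by
      rcases Finset.eq_empty_or_nonempty s with h | h
      · rw [h] at hp; simp at hp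
      · exact h
    have hscard : (s.card : ℝ) ≤ (k : ℝ) + 1 := by
      refine le_trans ?_ hkV
      exact_mod_cast Finset.card_image_le
    have hk1 : (0 : ℝ) < (k : ℝ) + 1 := by positivity
    obtain ⟨y0, hy0s, hy0⟩ : ∃ y ∈ s, 1 / ((k : ℝ) + 1) ≤ w y := by
      by_contra h
      push_neg at h
      have hlt : ∑ y ∈ s, w y < ∑ _y ∈ s, 1 / ((k : ℝ) + 1) :=
        Finset.sum_lt_sum_of_nonempty hsne h
      rw [hw1, Finset.sum_const, nsmul_eq_mul] at hlt
      have : (s.card : ℝ) * (1 / ((k : ℝ) + 1)) ≤ 1 := by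
        rw [mul_one_div, div_le_one hk1]; exact hscard
      linarith
    obtain ⟨v, hv, rfl⟩ := Finset.mem_image.mp hy0s
    set u : (Fin N → ℝ) → ℝ := fun y => ((k : ℝ) + 1) * w y - if y = toR v then 1 else 0
      with hudef
    have hu0 : ∀ y ∈ s, 0 ≤ u y := by
      intro y hy
      simp only [hudef]
      split_ifs with hYe
      · have h1 : 1 ≤ w (toR v) * ((k : ℝ) + 1) := (div_le_iff₀ hk1).mp hy0
        rw [hYe]
        nlinarith
      · have := hw0 y hy
        nlinarith
    have husum : ∑ y ∈ s, u y = (k : ℝ) := by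
      simp only [hudef, Finset.sum_sub_distrib, ← Finset.mul_sum, hw1,
        Finset.sum_ite_eq' s (toR v), hy0s, if_pos]
      ring
    have huvec : ∑ y ∈ s, u y • y = toR (x - v) := by
      rw [toR_sub]
      simp only [hudef, sub_smul, Finset.sum_sub_distrib, mul_smul, ← Finset.smul_sum, hwp,
        ite_smul, one_smul, zero_smul, Finset.sum_ite_eq' s (toR v), hy0s, if_pos]
      rw [← hxp]
    refine ⟨v, hv, x - v, ?_, by ring⟩
    rw [hpolys, ← huvec]
    exact sum_weight_mem_smul_convexHull s hsne u hu0 _ husum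
  · rintro ⟨v, hv, z, hz, rfl⟩
    have hconv : Convex ℝ (poly V) := convex_convexHull ℝ _
    rw [hcast, show (k : ℝ) + 1 = 1 + (k : ℝ) by ring,
      hconv.add_smul zero_le_one (Nat.cast_nonneg k), toR_add]
    refine Set.add_mem_add ?_ hz
    rw [one_smul]
    exact subset_convexHull ℝ _ ⟨v, hv, rfl⟩
end

section
/- Let P be a d-dimensional lattice polytope. Then for every integer k ≥ d-1, every lattice point of (k+1)P is the sum of a lattice point of P and a lattice point of kP; that is, (k+1)P ∩ M = (P ∩ M) + (kP ∩ M). -/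
open Finset Pointwise

/-!
By Carathéodory, a lattice point `x` of `(k+1)P` lies in `(k+1)Δ` for a lattice simplex `Δ ⊆ P`
with at most `d + 1 ≤ k + 2` vertices; write `x = ∑ μ_a a` with `∑ μ_a = k + 1`. If some
`μ_a ≥ 1`, then `x = a + (x - a)` with `x - a ∈ kΔ`. Otherwise `Δ` has exactly `k + 2` vertices
and `y = ∑ a - x = ∑ (1 - μ_a) a` is a lattice point of `Δ` with positive barycentric coordinates.
Trading a suitable vertex `j` of `Δ` for `y` yields a lattice simplex that still contains
`x / (k+1)` but misses the lattice point `j`, so induction on the number of lattice points of `Δ`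
concludes.
-/

section Convex

variable {E : Type*} [AddCommGroup E] [Module ℝ E]

lemma sum_smul_mem_smul_convexHull {ι : Type*} {s : Finset ι} {w : ι → ℝ} {p : ι → E}
    {S : Set E} (hw : ∀ i ∈ s, 0 ≤ w i) (hp : ∀ i ∈ s, p i ∈ S) (hS : S.Nonempty) :
    ∑ i ∈ s, w i • p i ∈ (∑ i ∈ s, w i) • convexHull ℝ S := by
  rcases (sum_nonneg hw).eq_or_lt with hzero | hpos
  · have hw0 : ∀ i ∈ s, w i = 0 := (sum_eq_zero_iff_of_nonneg hw).1 hzero.symm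
    rw [← hzero, Set.zero_smul_set (hS.mono (subset_convexHull ℝ S)),
      sum_eq_zero fun i hi => by rw [hw0 i hi, zero_smul]]
    exact Set.mem_zero.2 rfl
  · have hmem := Set.smul_mem_smul_set (a := ∑ i ∈ s, w i)
      (s.centerMass_mem_convexHull hw hpos hp)
    rwa [centerMass, smul_inv_smul₀ hpos.ne'] at hmem

lemma exists_weights_of_mem_smul_convexHull {A : Finset E} {t : ℝ} (ht : 0 ≤ t) {x : E}
    (hx : x ∈ t • convexHull ℝ (A : Set E)) :
    ∃ μ : E → ℝ, (∀ a ∈ A, 0 ≤ μ a) ∧ ∑ a ∈ A, μ a = t ∧ ∑ a ∈ A, μ a • a = x := by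
  obtain ⟨z, hz, rfl⟩ := hx
  obtain ⟨w, hw0, hw1, rfl⟩ := Finset.mem_convexHull'.1 hz
  refine ⟨fun a => t * w a, fun a ha => mul_nonneg ht (hw0 a ha), ?_, ?_⟩
  · rw [← mul_sum, hw1, mul_one]
  · simp only [smul_sum, mul_smul]

lemma exists_affineIndependent_of_mem_smul_convexHull {s : Set E} {t : ℝ} {x : E}
    (hx : x ∈ t • convexHull ℝ s) :
    ∃ B : Finset E, ↑B ⊆ s ∧ AffineIndependent ℝ ((↑) : B → E) ∧
      x ∈ t • convexHull ℝ (B : Set E) := by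
  obtain ⟨z, hz, rfl⟩ := hx
  rw [convexHull_eq_union] at hz
  simp only [Set.mem_iUnion] at hz
  obtain ⟨B, hBs, hB, hzB⟩ := hz
  exact ⟨B, hBs, hB, Set.smul_mem_smul_set hzB⟩

lemma AffineIndependent.card_le_finrank_vectorSpan_add_one_of_subset [FiniteDimensional ℝ E]
    {B : Finset E} {s : Set E}
    (hB : AffineIndependent ℝ ((↑) : B → E)) (hBs : (B : Set E) ⊆ s) :
    #B ≤ Module.finrank ℝ (vectorSpan ℝ s) + 1 := by
  have h := hB.card_le_finrank_succ
  rw [Fintype.card_coe] at h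
  exact h.trans (Nat.add_le_add_right
    (Submodule.finrank_mono (vectorSpan_mono ℝ (Subtype.range_coe.trans_subset hBs))) 1)

lemma sub_mem_smul_convexHull_of_one_le {A : Finset E} {μ : E → ℝ} (hμ : ∀ a ∈ A, 0 ≤ μ a)
    {p : E} (hp : p ∈ A) (hp1 : 1 ≤ μ p) :
    ∑ a ∈ A, μ a • a - p ∈ (∑ a ∈ A, μ a - 1) • convexHull ℝ (A : Set E) := by
  classical
  have hweights : ∑ a ∈ A, (μ a - if a = p then 1 else 0) = ∑ a ∈ A, μ a - 1 := by
    rw [sum_sub_distrib, sum_ite_eq' A p, if_pos hp]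
  have hcomb : ∑ a ∈ A, (μ a - if a = p then 1 else 0) • a = ∑ a ∈ A, μ a • a - p := by
    simp only [sub_smul, ite_smul, one_smul, zero_smul, sum_sub_distrib, sum_ite_eq' A p,
      if_pos hp]
  rw [← hweights, ← hcomb]
  refine sum_smul_mem_smul_convexHull (fun a ha => ?_) (fun a ha => ha) ⟨p, hp⟩
  split_ifs with hap
  · linarith [hap ▸ hp1]
  · simpa using hμ a ha

/-- Stellar subdivision at `∑ ν a • a`: the vertex `j` to trade is the one minimizing `μ / ν`. -/
lemma exists_mem_smul_convexHull_insert_erase [DecidableEq E] {A : Finset E} (hA : A.Nonempty)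
    {μ ν : E → ℝ} (hμ : ∀ a ∈ A, 0 ≤ μ a) (hν : ∀ a ∈ A, 0 < ν a) (hν1 : ∑ a ∈ A, ν a = 1) :
    ∃ j ∈ A, ∑ a ∈ A, μ a • a ∈
      (∑ a ∈ A, μ a) • convexHull ℝ ↑(insert (∑ a ∈ A, ν a • a) (A.erase j)) := by
  obtain ⟨j, hj, hmin⟩ := A.exists_min_image (fun a => μ a / ν a) hA
  set c := μ j / ν j
  set y := ∑ a ∈ A, ν a • a
  have hc : 0 ≤ c := div_nonneg (hμ j hj) (hν j hj).le
  have hw : ∀ a ∈ A, 0 ≤ μ a - c * ν a := fun a ha =>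
    sub_nonneg.2 ((le_div_iff₀ (hν a ha)).1 (hmin a ha))
  have hwj : μ j - c * ν j = 0 := by rw [div_mul_cancel₀ _ (hν j hj).ne', sub_self]
  have hsum : ∑ a ∈ A.erase j, (μ a - c * ν a) = ∑ a ∈ A, μ a - c := by
    rw [sum_erase A hwj, sum_sub_distrib, ← mul_sum, hν1, mul_one]
  have hcomb : ∑ a ∈ A, μ a • a = c • y + ∑ a ∈ A.erase j, (μ a - c * ν a) • a := by
    rw [sum_erase A (by rw [hwj, zero_smul]), smul_sum]
    simp only [sub_smul, mul_smul, sum_sub_distrib]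
    abel
  refine ⟨j, hj, ?_⟩
  rw [hcomb, show ∑ a ∈ A, μ a = c + (∑ a ∈ A, μ a - c) by ring,
    (convex_convexHull ℝ _).add_smul hc (hsum ▸ sum_nonneg fun a ha => hw a (mem_of_mem_erase ha))]
  refine Set.add_mem_add (Set.smul_mem_smul_set (subset_convexHull ℝ _ (mem_insert_self y _))) ?_
  rw [← hsum]
  exact sum_smul_mem_smul_convexHull (fun a ha => hw a (mem_of_mem_erase ha))
    (fun a ha => mem_insert_of_mem ha) ⟨y, mem_insert_self y _⟩

lemma AffineIndependent.eq_ite_of_sum_smul_eq_of_mem [DecidableEq E] {A : Finset E}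
    (hA : AffineIndependent ℝ ((↑) : A → E)) {w : E → ℝ} (hw1 : ∑ a ∈ A, w a = 1) {j : E}
    (hj : j ∈ A) (hwj : ∑ a ∈ A, w a • a = j) : ∀ a ∈ A, w a = if a = j then 1 else 0 :=
  hA.eq_of_sum_eq_sum_subtype (by rw [hw1, sum_ite_eq' A j, if_pos hj])
    (by simp only [ite_smul, one_smul, zero_smul, sum_ite_eq' A j, if_pos hj, hwj])

lemma AffineIndependent.mem_extremePoints_convexHull {A : Finset E}
    (hA : AffineIndependent ℝ ((↑) : A → E)) {j : E} (hj : j ∈ A) :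
    j ∈ (convexHull ℝ (A : Set E)).extremePoints ℝ := by
  classical
  refine mem_extremePoints_iff_left.2 ⟨subset_convexHull ℝ _ hj, ?_⟩
  rintro x₁ hx₁ x₂ hx₂ ⟨a, b, ha, hb, hab, hx⟩
  obtain ⟨w₁, hw₁0, hw₁1, rfl⟩ := mem_convexHull'.1 hx₁
  obtain ⟨w₂, hw₂0, hw₂1, rfl⟩ := mem_convexHull'.1 hx₂
  have hcoord := hA.eq_ite_of_sum_smul_eq_of_mem (w := fun c => a * w₁ c + b * w₂ c)
    (by simp only [sum_add_distrib, ← mul_sum, hw₁1, hw₂1, mul_one, hab]) hj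
    (by simpa only [add_smul, mul_smul, sum_add_distrib, ← smul_sum] using hx)
  have hoff : ∀ c ∈ A, c ≠ j → w₁ c = 0 := fun c hc hcj => by
    have h := hcoord c hc
    rw [if_neg hcj] at h
    have := ((add_eq_zero_iff_of_nonneg (mul_nonneg ha.le (hw₁0 c hc))
      (mul_nonneg hb.le (hw₂0 c hc))).1 h).1
    exact (mul_eq_zero.1 this).resolve_left ha.ne'
  have hw₁j : w₁ j = 1 := by rw [← hw₁1, sum_eq_single_of_mem j hj hoff]
  rw [sum_eq_single_of_mem j hj fun c hc hcj => by rw [hoff c hc hcj, zero_smul], hw₁j, one_smul]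

lemma convexHull_insert_erase_subset [DecidableEq E] {A : Finset E} {j y : E}
    (hy : y ∈ convexHull ℝ (A : Set E)) :
    convexHull ℝ ↑(insert y (A.erase j)) ⊆ convexHull ℝ (A : Set E) := by
  refine convexHull_min ?_ (convex_convexHull ℝ _)
  rw [coe_insert, Set.insert_subset_iff]
  exact ⟨hy, (coe_subset.2 (erase_subset j A)).trans (subset_convexHull ℝ _)⟩

lemma AffineIndependent.notMem_convexHull_insert_erase [DecidableEq E] {A : Finset E}
    (hA : AffineIndependent ℝ ((↑) : A → E)) {j y : E} (hj : j ∈ A)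
    (hy : y ∈ convexHull ℝ (A : Set E)) (hyj : y ≠ j) :
    j ∉ convexHull ℝ ↑(insert y (A.erase j)) := fun h => by
  have hext := extremePoints_convexHull_subset (inter_extremePoints_subset_extremePoints_of_subset
    (convexHull_insert_erase_subset hy) ⟨h, hA.mem_extremePoints_convexHull hj⟩)
  rcases mem_insert.1 (mem_coe.1 hext) with hjy | hjA
  · exact hyj hjy.symm
  · exact notMem_erase j A hjA

end Convex

lemma card_eq_of_sum_eq_of_lt_one {ι : Type*} {A : Finset ι} {μ : ι → ℝ} {k : ℕ}
    (hμ : ∑ a ∈ A, μ a = k + 1) (hlt : ∀ a ∈ A, μ a < 1) (hcard : #A ≤ k + 2) : #A = k + 2 := by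
  have hne : A.Nonempty := nonempty_of_sum_ne_zero (by rw [hμ]; positivity)
  have hlt' : (k : ℝ) + 1 < #A := by
    calc (k : ℝ) + 1 = ∑ a ∈ A, μ a := hμ.symm
      _ < ∑ _a ∈ A, (1 : ℝ) := sum_lt_sum_of_nonempty hne hlt
      _ = #A := by simp
  have : k + 1 < #A := by exact_mod_cast hlt'
  omega

section Lattice

variable {E : Type*} [AddCommGroup E] [Module ℝ E]

lemma exists_smaller_lattice_simplex (L : AddSubgroup E) {A : Finset E}
    (hA : AffineIndependent ℝ ((↑) : A → E)) (hAL : (A : Set E) ⊆ L) (hA2 : 1 < #A)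
    {μ : E → ℝ} (hμ0 : ∀ a ∈ A, 0 ≤ μ a) (hμ1 : ∀ a ∈ A, μ a < 1)
    (hν1 : ∑ a ∈ A, (1 - μ a) = 1) (hxL : ∑ a ∈ A, μ a • a ∈ L) :
    ∃ B : Finset E, AffineIndependent ℝ ((↑) : B → E) ∧ (B : Set E) ⊆ L ∧ #B ≤ #A ∧
      convexHull ℝ (B : Set E) ⊆ convexHull ℝ (A : Set E) ∧
      (∃ j ∈ A, j ∉ convexHull ℝ (B : Set E)) ∧
      ∑ a ∈ A, μ a • a ∈ (∑ a ∈ A, μ a) • convexHull ℝ (B : Set E) := by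
  classical
  have hν0 : ∀ a ∈ A, 0 < 1 - μ a := fun a ha => sub_pos.2 (hμ1 a ha)
  set y := ∑ a ∈ A, (1 - μ a) • a
  have hyL : y ∈ L := by
    have hy_eq : y = ∑ a ∈ A, a - ∑ a ∈ A, μ a • a := by
      simp only [y, sub_smul, one_smul, sum_sub_distrib]
    rw [hy_eq]
    exact L.sub_mem (L.sum_mem fun a ha => hAL ha) hxL
  have hy : y ∈ convexHull ℝ (A : Set E) :=
    mem_convexHull'.2 ⟨fun a => 1 - μ a, fun a ha => (hν0 a ha).le, hν1, rfl⟩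
  obtain ⟨j, hj, hxj⟩ :=
    exists_mem_smul_convexHull_insert_erase (card_pos.1 (by omega)) hμ0 hν0 hν1
  have hyj : y ≠ j := by
    intro hyj
    obtain ⟨a, ha, haj⟩ := exists_mem_ne hA2 j
    have := hA.eq_ite_of_sum_smul_eq_of_mem hν1 hj hyj a ha
    rw [if_neg haj] at this
    exact (hν0 a ha).ne' this
  obtain ⟨B, hBsub, hB, hxB⟩ := exists_affineIndependent_of_mem_smul_convexHull hxj
  refine ⟨B, hB, hBsub.trans ?_, ?_, (convexHull_mono hBsub).trans
    (convexHull_insert_erase_subset hy), ⟨j, hj, fun h => hA.notMem_convexHull_insert_erase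
      hj hy hyj (convexHull_mono hBsub h)⟩, hxB⟩
  · rw [coe_insert, Set.insert_subset_iff]
    exact ⟨hyL, (coe_subset.2 (erase_subset j A)).trans hAL⟩
  · calc #B ≤ #(insert y (A.erase j)) := card_le_card (coe_subset.1 hBsub)
      _ ≤ #(A.erase j) + 1 := card_insert_le _ _
      _ = #A := card_erase_add_one hj

theorem mem_inter_add_inter_of_mem_succ_smul_convexHull (L : AddSubgroup E) (k : ℕ)
    {A : Finset E} (hA : AffineIndependent ℝ ((↑) : A → E)) (hAL : (A : Set E) ⊆ L)
    (hcard : #A ≤ k + 2) (hfin : (convexHull ℝ (A : Set E) ∩ L).Finite) {x : E} (hxL : x ∈ L)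
    (hx : x ∈ ((k : ℝ) + 1) • convexHull ℝ (A : Set E)) :
    x ∈ (convexHull ℝ (A : Set E) ∩ L) + ((k : ℝ) • convexHull ℝ (A : Set E) ∩ L) := by
  induction hn : (convexHull ℝ (A : Set E) ∩ L).ncard using Nat.strong_induction_on
    generalizing A with
  | _ n ih =>
  obtain ⟨μ, hμ0, hμsum, rfl⟩ := exists_weights_of_mem_smul_convexHull (by positivity) hx
  by_cases hbig : ∃ p ∈ A, 1 ≤ μ p
  · obtain ⟨p, hp, hp1⟩ := hbig
    refine ⟨p, ⟨subset_convexHull ℝ _ hp, hAL hp⟩, _ - p, ⟨?_, L.sub_mem hxL (hAL hp)⟩,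
      add_sub_cancel _ _⟩
    simpa only [hμsum, add_sub_cancel_right] using sub_mem_smul_convexHull_of_one_le hμ0 hp hp1
  push Not at hbig
  have hcardA := card_eq_of_sum_eq_of_lt_one hμsum hbig hcard
  have hν1 : ∑ a ∈ A, (1 - μ a) = 1 := by
    rw [sum_sub_distrib, hμsum, sum_const, hcardA, nsmul_eq_mul, mul_one]
    push_cast
    ring
  obtain ⟨B, hB, hBL, hBcard, hBA, ⟨j, hj, hjB⟩, hxB⟩ :=
    exists_smaller_lattice_simplex L hA hAL (by omega) hμ0 hbig hν1 hxL
  rw [hμsum] at hxB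
  have hlt : (convexHull ℝ (B : Set E) ∩ L).ncard < n := hn ▸ Set.ncard_lt_ncard
    ⟨Set.inter_subset_inter_left _ hBA,
      fun h => hjB (h ⟨subset_convexHull ℝ _ hj, hAL hj⟩).1⟩ hfin
  exact Set.add_subset_add (Set.inter_subset_inter_left _ hBA)
    (Set.inter_subset_inter_left _ (Set.smul_set_mono hBA))
    (ih _ hlt hB hBL (hBcard.trans hcard) (hfin.subset (Set.inter_subset_inter_left _ hBA)) hxB rfl)

end Lattice

section IntegerLattice

variable {N : ℕ}

def toRHom (N : ℕ) : ZL N →+ (Fin N → ℝ) := AddMonoidHom.compLeft (Int.castAddHom ℝ) (Fin N)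

@[simp]
lemma toRHom_apply (x : ZL N) : toRHom N x = toR x := rfl

lemma isometry_toR : Isometry (toR (N := N)) :=
  Isometry.piMap (fun _ => Int.cast) fun _ => Real.isometry_intCast

lemma toR_injective : Function.Injective (toR (N := N)) := isometry_toR.injective

lemma finite_inter_range_toR {s : Set (Fin N → ℝ)} (hs : Bornology.IsBounded s) :
    (s ∩ (toRHom N).range).Finite := by
  have hpre : (toR ⁻¹' s).Finite :=
    (Metric.isCompact_of_isClosed_isBounded (isClosed_discrete _)
      (isometry_toR.antilipschitz.isBounded_preimage hs)).finite_of_discrete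
  refine (hpre.image toR).subset ?_
  rintro _ ⟨hz, z, rfl⟩
  exact ⟨z, hz, rfl⟩

lemma latPts_add_subset (V : Finset (ZL N)) (m n : ℕ) :
    latPts V m + latPts V n ⊆ latPts V (m + n) := by
  rintro _ ⟨p, hp, q, hq, rfl⟩
  change toR (p + q) ∈ ((m + n : ℕ) : ℝ) • poly V
  rw [Nat.cast_add, poly, (convex_convexHull ℝ _).add_smul (Nat.cast_nonneg m) (Nat.cast_nonneg n),
    ← toRHom_apply, map_add]
  exact Set.add_mem_add hp hq

end IntegerLattice

/-- For a `d`-dimensional lattice polytope `P`, for every `k ≥ d - 1` one has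
`(k+1)P ∩ M = (P ∩ M) + (kP ∩ M)`. -/
theorem stmt1 {N d : ℕ} (V : Finset (ZL N))
    (hdim : Module.finrank ℝ ↥(vectorSpan ℝ (poly V)) = d) :
    ∀ k : ℕ, d - 1 ≤ k →
      latPts V (k + 1) = latPts V 1 + latPts V k := by
  intro k hk
  refine Set.Subset.antisymm (fun x hx => ?_) (add_comm k 1 ▸ latPts_add_subset V 1 k)
  obtain ⟨B, hBV, hB, hxB⟩ := exists_affineIndependent_of_mem_smul_convexHull hx
  have hBP : convexHull ℝ (B : Set (Fin N → ℝ)) ⊆ poly V := convexHull_mono hBV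
  have hcard : #B ≤ k + 2 :=
    (hB.card_le_finrank_vectorSpan_add_one_of_subset (hBV.trans (subset_convexHull ℝ _))).trans
      (by rw [← poly, hdim]; omega)
  have hBL : (B : Set (Fin N → ℝ)) ⊆ (toRHom N).range := by
    rintro _ hb
    obtain ⟨v, -, rfl⟩ := hBV hb
    exact ⟨v, rfl⟩
  push_cast at hxB
  obtain ⟨_, ⟨hpB, p, rfl⟩, _, ⟨hqB, q, rfl⟩, hpq⟩ :=
    mem_inter_add_inter_of_mem_succ_smul_convexHull (toRHom N).range k hB hBL hcard
      (finite_inter_range_toR ((B.finite_toSet.isCompact_convexHull ℝ).isBounded)) ⟨x, rfl⟩ hxB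
  refine ⟨p, ?_, q, Set.smul_set_mono hBP hqB, toR_injective ?_⟩
  · change toR p ∈ ((1 : ℕ) : ℝ) • poly V
    rw [Nat.cast_one, one_smul]
    exact hBP hpB
  · rwa [← toRHom_apply, map_add]
end

section
/- Let P be a very ample lattice polytope with n vertices. Then k_P ≤ (m_P − d_P)·n + 1, with equality if and only if P is normal. -/
open Finset Pointwise

namespace St9

variable {N : ℕ}

lemma toR_inj : Function.Injective (toR (N := N)) := by
  intro x y h
  funext i
  have := congrFun h i
  simp only [toR] at this
  exact_mod_cast this

lemma toR_add (x y : ZL N) : toR (x + y) = toR x + toR y := by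
  funext i; simp [toR]

lemma toR_sub (x y : ZL N) : toR (x - y) = toR x - toR y := by
  funext i; simp [toR]

lemma toR_zero : toR (0 : ZL N) = 0 := by
  funext i; simp [toR]

lemma toR_nsmul (c : ℕ) (x : ZL N) : toR (c • x) = (c : ℝ) • toR x := by
  funext i; simp [toR]

/-- weight representation -/
def wtRep (V : Finset (ZL N)) (k : ℕ) (x : ZL N) (c : ZL N → ℝ) : Prop :=
  (∀ v ∈ V, 0 ≤ c v) ∧ ∑ v ∈ V, c v = (k : ℝ) ∧ ∑ v ∈ V, c v • toR v = toR x

lemma wt_of_mem {V : Finset (ZL N)} {k : ℕ} {x : ZL N} (hx : x ∈ latPts V k) :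
    ∃ c, wtRep V k x c := by
  obtain ⟨p, hp, hxp⟩ := Set.mem_smul_set.mp hx
  rcases Nat.eq_zero_or_pos k with rfl | hk
  · refine ⟨0, fun v _ => le_refl _, by simp, ?_⟩
    simp only [Pi.zero_apply, zero_smul, Finset.sum_const_zero]
    rw [Nat.cast_zero, zero_smul] at hxp
    rw [← hxp]
  · have hp' : p ∈ convexHull ℝ ((V.image toR : Finset (Fin N → ℝ)) : Set (Fin N → ℝ)) := by
      rwa [Finset.coe_image]
    rw [Finset.mem_convexHull'] at hp'
    obtain ⟨w, hw0, hw1, hwp⟩ := hp'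
    have hinj : Set.InjOn toR (V : Set (ZL N)) := toR_inj.injOn
    refine ⟨fun v => (k : ℝ) * w (toR v), fun v hv => ?_, ?_, ?_⟩
    · exact mul_nonneg (by positivity) (hw0 _ (Finset.mem_image_of_mem _ hv))
    · rw [← Finset.mul_sum, ← Finset.sum_image (fun a ha b hb h => hinj ha hb h), hw1, mul_one]
    · have : ∑ v ∈ V, ((k : ℝ) * w (toR v)) • toR v
          = (k : ℝ) • ∑ v ∈ V, w (toR v) • toR v := by
        rw [Finset.smul_sum]
        refine Finset.sum_congr rfl fun v _ => ?_
        rw [smul_smul]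
      rw [this]
      have himg : ∑ v ∈ V, w (toR v) • toR v = ∑ y ∈ V.image toR, w y • y := by
        rw [Finset.sum_image (fun a ha b hb h => hinj ha hb h)]
      rw [himg, hwp, hxp]

lemma mem_of_wt {V : Finset (ZL N)} (hne : V.Nonempty) {k : ℕ} {x : ZL N} {c : ZL N → ℝ}
    (hc : wtRep V k x c) : x ∈ latPts V k := by
  obtain ⟨hc0, hc1, hcx⟩ := hc
  rcases Nat.eq_zero_or_pos k with rfl | hk
  · have hz : ∀ v ∈ V, c v = 0 := by
      intro v hv
      have := (Finset.sum_eq_zero_iff_of_nonneg hc0).mp (by simpa using hc1)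
      exact this v hv
    have : toR x = 0 := by
      rw [← hcx]
      exact Finset.sum_eq_zero fun v hv => by rw [hz v hv, zero_smul]
    have hpne : (poly V).Nonempty := by
      obtain ⟨v, hv⟩ := hne
      exact ⟨toR v, subset_convexHull ℝ _ ⟨v, hv, rfl⟩⟩
    simp only [latPts, Set.mem_setOf_eq, Nat.cast_zero]
    rw [Set.zero_smul_set hpne, this]
    exact Set.zero_mem_zero
  · have hkR : (0 : ℝ) < (k : ℝ) := by exact_mod_cast hk
    set p : Fin N → ℝ := (k : ℝ)⁻¹ • toR x with hpdef
    have hp : p ∈ poly V := by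
      refine mem_convexHull_of_exists_fintype (ι := {v // v ∈ V})
        (fun v => (k : ℝ)⁻¹ * c v.1) (fun v => toR v.1) (fun v => ?_) ?_ (fun v => ?_) ?_
      · exact mul_nonneg (by positivity) (hc0 _ v.2)
      · rw [← Finset.mul_sum]
        rw [Finset.sum_coe_sort V (fun v => c v), hc1]
        field_simp
      · exact ⟨v.1, v.2, rfl⟩
      · have : ∑ v : {v // v ∈ V}, ((k : ℝ)⁻¹ * c v.1) • toR v.1
            = (k : ℝ)⁻¹ • ∑ v : {v // v ∈ V}, c v.1 • toR v.1 := by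
          rw [Finset.smul_sum]
          exact Finset.sum_congr rfl fun v _ => by rw [smul_smul]
        rw [this, Finset.sum_coe_sort V (fun v => c v • toR v), hcx, hpdef]
    simp only [latPts, Set.mem_setOf_eq]
    refine Set.mem_smul_set.mpr ⟨p, hp, ?_⟩
    rw [hpdef, smul_inv_smul₀ (ne_of_gt hkR)]

/-- `x` is a sum of `k` lattice points of `P`. -/
def Sums (V : Finset (ZL N)) (k : ℕ) (x : ZL N) : Prop :=
  ∃ f : Fin k → ZL N, (∀ i, f i ∈ latPts V 1) ∧ ∑ i, f i = x

lemma kNormal_iff {V : Finset (ZL N)} {k : ℕ} :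
    kNormal V k ↔ ∀ x ∈ latPts V k, Sums V k x := Iff.rfl

lemma sums_single {V : Finset (ZL N)} {x : ZL N} (hx : x ∈ latPts V 1) : Sums V 1 x :=
  ⟨fun _ => x, fun _ => hx, by simp⟩

lemma sums_nsmul {V : Finset (ZL N)} {u : ZL N} (hu : u ∈ latPts V 1) (c : ℕ) :
    Sums V c (c • u) :=
  ⟨fun _ => u, fun _ => hu, by simp [Finset.sum_const]⟩

lemma sums_add {V : Finset (ZL N)} {a b : ℕ} {x y : ZL N}
    (hx : Sums V a x) (hy : Sums V b y) : Sums V (a + b) (x + y) := by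
  obtain ⟨f, hf, hfs⟩ := hx
  obtain ⟨g, hg, hgs⟩ := hy
  refine ⟨Fin.addCases (motive := fun _ => ZL N) f g, ?_, ?_⟩
  · intro i
    induction i using Fin.addCases with
    | left i => rw [Fin.addCases_left]; exact hf i
    | right i => rw [Fin.addCases_right]; exact hg i
  · rw [Fin.sum_univ_add]
    simp only [Fin.addCases_left, Fin.addCases_right, hfs, hgs]

lemma sums_cast {V : Finset (ZL N)} {a b : ℕ} {x : ZL N} (h : a = b) (hx : Sums V a x) :
    Sums V b x := h ▸ hx

lemma mem_latPts_one {V : Finset (ZL N)} {v : ZL N} (hv : v ∈ V) : v ∈ latPts V 1 := by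
  simp only [latPts, Set.mem_setOf_eq, Nat.cast_one, one_smul]
  exact subset_convexHull ℝ _ ⟨v, hv, rfl⟩

lemma latPts_add {V : Finset (ZL N)} (hne : V.Nonempty) {a b : ℕ} {x y : ZL N}
    (hx : x ∈ latPts V a) (hy : y ∈ latPts V b) : x + y ∈ latPts V (a + b) := by
  obtain ⟨c, hc0, hc1, hcx⟩ := wt_of_mem hx
  obtain ⟨d, hd0, hd1, hdx⟩ := wt_of_mem hy
  refine mem_of_wt hne (c := c + d) ⟨fun v hv => add_nonneg (hc0 v hv) (hd0 v hv), ?_, ?_⟩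
  · simp only [Pi.add_apply, Finset.sum_add_distrib, hc1, hd1]
    push_cast; ring
  · simp only [Pi.add_apply, add_smul, Finset.sum_add_distrib, hcx, hdx, toR_add]

lemma sums_mem_latPts {V : Finset (ZL N)} (hne : V.Nonempty) {k : ℕ} {x : ZL N}
    (hx : Sums V k x) : x ∈ latPts V k := by
  induction k generalizing x with
  | zero =>
    obtain ⟨f, _, hfs⟩ := hx
    have : x = 0 := by rw [← hfs]; simp
    subst this
    exact mem_of_wt hne (c := 0) ⟨fun v _ => le_refl _, by simp, by simp [toR_zero]⟩
  | succ k ih =>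
    obtain ⟨f, hf, hfs⟩ := hx
    have : x = f 0 + ∑ i : Fin k, f i.succ := by rw [← hfs, Fin.sum_univ_succ]
    subst this
    have h1 : f 0 + ∑ i : Fin k, f i.succ ∈ latPts V (1 + k) :=
      latPts_add hne (hf 0) (ih ⟨fun i => f i.succ, fun i => hf _, rfl⟩)
    rwa [add_comm 1 k] at h1

/-- Split: a sum of `t+1` points lies in `latPts 1 + latPts t`. -/
lemma sums_split {V : Finset (ZL N)} (hne : V.Nonempty) {t : ℕ} {x : ZL N}
    (hx : Sums V (t + 1) x) : x ∈ latPts V 1 + latPts V t := by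
  obtain ⟨f, hf, hfs⟩ := hx
  have hx' : x = f 0 + ∑ i : Fin t, f i.succ := by rw [← hfs, Fin.sum_univ_succ]
  rw [hx']
  exact Set.add_mem_add (hf 0)
    (sums_mem_latPts hne ⟨fun i : Fin t => f i.succ, fun i => hf _, rfl⟩)


lemma exists_big_wt {V : Finset (ZL N)} (hne : V.Nonempty) {k : ℕ} {x : ZL N} {c : ZL N → ℝ}
    (hc : wtRep V k x c) : ∃ u ∈ V, (k : ℝ) / V.card ≤ c u := by
  have hcard : (0 : ℝ) < V.card := by exact_mod_cast Finset.card_pos.mpr hne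
  have hsum : ∑ _v ∈ V, (k : ℝ) / V.card ≤ ∑ v ∈ V, c v := by
    rw [Finset.sum_const, hc.2.1, nsmul_eq_mul]
    rw [mul_div_cancel₀ _ (ne_of_gt hcard)]
  exact Finset.exists_le_of_sum_le hne hsum

lemma peel {V : Finset (ZL N)} (hne : V.Nonempty) {k j : ℕ} {x u : ZL N} {c : ZL N → ℝ}
    (hc : wtRep V k x c) (hu : u ∈ V) (hj : (j : ℝ) ≤ c u) (hjk : j ≤ k) :
    x - j • u ∈ latPts V (k - j) := by
  classical
  have hne' : ∀ v ∈ V \ {u}, v ≠ u := by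
    intro v hv h
    exact absurd (Finset.mem_singleton.mpr h) (Finset.mem_sdiff.mp hv).2
  have h1 : ∑ v ∈ V \ {u}, Function.update c u (c u - (j : ℝ)) v = ∑ v ∈ V \ {u}, c v :=
    Finset.sum_congr rfl fun v hv => by rw [Function.update_of_ne (hne' v hv)]
  have h2 : ∑ v ∈ V \ {u}, Function.update c u (c u - (j : ℝ)) v • toR v
      = ∑ v ∈ V \ {u}, c v • toR v :=
    Finset.sum_congr rfl fun v hv => by rw [Function.update_of_ne (hne' v hv)]
  refine mem_of_wt hne (c := Function.update c u (c u - j)) ⟨?_, ?_, ?_⟩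
  · intro v hv
    rcases eq_or_ne v u with rfl | hvu
    · rw [Function.update_self]; linarith
    · rw [Function.update_of_ne hvu]; exact hc.1 v hv
  · rw [Finset.sum_eq_sum_sdiff_singleton_add hu, Function.update_self, h1, Nat.cast_sub hjk]
    have h3 := hc.2.1
    rw [Finset.sum_eq_sum_sdiff_singleton_add hu] at h3
    linarith
  · rw [Finset.sum_eq_sum_sdiff_singleton_add hu, Function.update_self, h2, toR_sub, toR_nsmul,
      sub_smul]
    have h3 := hc.2.2
    rw [Finset.sum_eq_sum_sdiff_singleton_add hu] at h3
    rw [← h3]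
    abel

lemma descend {V : Finset (ZL N)} (hne : V.Nonempty) {dP : ℕ}
    (hd : ∀ k ≥ dP, latPts V (k + 1) = latPts V 1 + latPts V k) :
    ∀ k, dP ≤ k → ∀ x ∈ latPts V k, ∃ y ∈ latPts V dP, Sums V (k - dP) (x - y) := by
  intro k hk
  induction k, hk using Nat.le_induction with
  | base =>
    intro x hx
    refine ⟨x, hx, ?_⟩
    rw [Nat.sub_self, sub_self]
    exact ⟨Fin.elim0, fun i => i.elim0, by simp⟩
  | succ k hk ih =>
    intro x hx
    rw [hd k hk] at hx
    obtain ⟨a, ha, b, hb, rfl⟩ := Set.mem_add.mp hx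
    obtain ⟨y, hy, hs⟩ := ih b hb
    refine ⟨y, hy, ?_⟩
    have hval : a + b - y = a + (b - y) := by abel
    rw [hval]
    exact sums_cast (by omega) (sums_add (sums_single ha) hs)

lemma sigma_le {V : Finset (ZL N)} (hva : VeryAmple V)
    (hvert : ∀ v ∈ V, toR v ∈ Set.extremePoints ℝ (poly V)) {dP mP : ℕ}
    (hmP : mP ∈ upperBounds (mSet V dP))
    {y u : ZL N} (hy : y ∈ latPts V dP) (hu : u ∈ V) :
    ∃ m ≤ mP, m ∈ sigmaSet V dP y u := by
  classical
  obtain ⟨p, hp, hyp⟩ := Set.mem_smul_set.mp hy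
  have hray : ∃ c : ℝ, 0 ≤ c ∧ ∃ q ∈ poly V, toR (y - dP • u) = c • (q - toR u) :=
    ⟨(dP : ℝ), by positivity, p, hp, by rw [toR_sub, toR_nsmul, ← hyp, smul_sub]⟩
  obtain ⟨m₀, w, hw, heq⟩ := hva u ⟨hu, hvert u hu⟩ (y - dP • u) hray
  have hne0 : ∃ m, m ∈ sigmaSet V dP y u := ⟨m₀, w, hw, heq⟩
  have hmem : Nat.find hne0 ∈ sigmaSet V dP y u := Nat.find_spec hne0
  have hleast : IsLeast (sigmaSet V dP y u) (Nat.find hne0) :=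
    ⟨hmem, fun b hb => Nat.find_min' hne0 hb⟩
  exact ⟨Nat.find hne0, hmP ⟨y, hy, u, ⟨hu, hvert u hu⟩, hleast⟩, hmem⟩

lemma sigma_extract {V : Finset (ZL N)} {dP m : ℕ} {y u : ZL N}
    (h : m ∈ sigmaSet V dP y u) :
    ∃ w : Fin m → ZL N, (∀ i, w i ∈ latPts V 1) ∧ ∑ i, w i = y - dP • u + m • u := by
  obtain ⟨w, hw, heq⟩ := h
  refine ⟨w, hw, ?_⟩
  have hsum : ∑ i, (w i - u) = ∑ i, w i - m • u := by
    rw [Finset.sum_sub_distrib, Finset.sum_const, Finset.card_univ, Fintype.card_fin]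
  rw [hsum] at heq
  have := heq.symm
  rw [sub_eq_iff_eq_add] at this
  rw [this]

lemma kNormal_of_big {V : Finset (ZL N)} (hne : V.Nonempty) (hva : VeryAmple V)
    (hvert : ∀ v ∈ V, toR v ∈ Set.extremePoints ℝ (poly V)) {dP mP : ℕ}
    (hd : ∀ k ≥ dP, latPts V (k + 1) = latPts V 1 + latPts V k)
    (hmP : mP ∈ upperBounds (mSet V dP))
    {e : ℕ} (he : dP + e = mP) {k : ℕ} (hk1 : e * V.card ≤ k) (hk2 : dP + e ≤ k) :
    kNormal V k := by
  intro x hx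
  obtain ⟨c, hc⟩ := wt_of_mem hx
  obtain ⟨u, hu, hcu⟩ := exists_big_wt hne hc
  have hcard : (0 : ℝ) < V.card := by exact_mod_cast Finset.card_pos.mpr hne
  have hce : (e : ℝ) ≤ c u := by
    refine le_trans ((le_div_iff₀ hcard).mpr ?_) hcu
    exact_mod_cast hk1
  have hz : x - e • u ∈ latPts V (k - e) := peel hne hc hu hce (by omega)
  obtain ⟨y, hy, hs⟩ := descend hne hd (k - e) (by omega) _ hz
  obtain ⟨m, hm, hmem⟩ := sigma_le hva hvert hmP hy hu
  obtain ⟨w, hw, hws⟩ := sigma_extract hmem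
  have hmd : m ≤ dP + e := he ▸ hm
  have h2 : Sums V m (∑ i, w i) := ⟨w, hw, rfl⟩
  have h3 : Sums V (dP + e - m) ((dP + e - m) • u) := sums_nsmul (mem_latPts_one hu) _
  have htot := sums_add (sums_add hs h2) h3
  have hval : (x - e • u - y) + (∑ i, w i) + (dP + e - m) • u = x := by
    rw [hws]
    have h5 : ((dP + e - m) : ℕ) • u = dP • u + e • u - m • u := by
      rw [eq_sub_iff_add_eq, ← add_nsmul]
      have : dP + e - m + m = dP + e := by omega
      rw [this, add_nsmul]
    rw [h5]
    abel
  rw [hval] at htot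
  have hcount : k - e - dP + m + (dP + e - m) = k := by omega
  exact sums_cast hcount htot

lemma dSet_mem_max {V : Finset (ZL N)} (hne : V.Nonempty) : max 1 (V.card - 1) ∈ dSet V := by
  refine ⟨lt_of_lt_of_le one_pos (le_max_left _ _), fun k hk => ?_⟩
  apply Set.Subset.antisymm
  · intro x hx
    obtain ⟨c, hc⟩ := wt_of_mem hx
    obtain ⟨u, hu, hcu⟩ := exists_big_wt hne hc
    have hcard : (0 : ℝ) < V.card := by exact_mod_cast Finset.card_pos.mpr hne
    have hn1 : V.card ≤ k + 1 := by
      have := le_trans (le_max_right 1 (V.card - 1)) hk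
      have hc1 := Finset.card_pos.mpr hne
      omega
    have h1 : ((1 : ℕ) : ℝ) ≤ c u := by
      refine le_trans ((le_div_iff₀ hcard).mpr ?_) hcu
      have : (V.card : ℝ) ≤ ((k + 1 : ℕ) : ℝ) := by exact_mod_cast hn1
      push_cast at this ⊢
      linarith
    have hpeel : x - 1 • u ∈ latPts V (k + 1 - 1) := peel hne hc hu h1 (by omega)
    have hxeq : x = u + (x - 1 • u) := by rw [one_smul]; abel
    rw [hxeq]
    exact Set.add_mem_add (mem_latPts_one hu) (by simpa using hpeel)
  · intro x hx
    obtain ⟨a, ha, b, hb, rfl⟩ := Set.mem_add.mp hx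
    have := latPts_add hne ha hb
    rwa [add_comm 1 k] at this


lemma normal_of_d_one {V : Finset (ZL N)}
    (hd : ∀ k ≥ 1, latPts V (k + 1) = latPts V 1 + latPts V k) : NormalPoly V := by
  intro k hk
  induction k, hk using Nat.le_induction with
  | base => intro x hx; exact sums_single hx
  | succ k hk ih =>
    intro x hx
    rw [hd k hk] at hx
    obtain ⟨a, ha, b, hb, rfl⟩ := Set.mem_add.mp hx
    exact sums_cast (by omega) (sums_add (sums_single ha) (ih b hb))

lemma normal_dSet_one {V : Finset (ZL N)} (hne : V.Nonempty) (hn : NormalPoly V) :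
    1 ∈ dSet V := by
  refine ⟨one_pos, fun k hk => ?_⟩
  apply Set.Subset.antisymm
  · intro x hx
    exact sums_split hne (hn (k + 1) (by omega) x hx)
  · intro x hx
    obtain ⟨a, ha, b, hb, rfl⟩ := Set.mem_add.mp hx
    have := latPts_add hne ha hb
    rwa [add_comm 1 k] at this

lemma card_one_normal {V : Finset (ZL N)} (hV : V.card = 1) : NormalPoly V := by
  obtain ⟨v, rfl⟩ := Finset.card_eq_one.mp hV
  intro k _ x hx
  have hpoly : poly ({v} : Finset (ZL N)) = {toR v} := by
    rw [poly, Finset.coe_singleton, Set.image_singleton, convexHull_singleton]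
  have hmem : toR x ∈ (k : ℝ) • ({toR v} : Set (Fin N → ℝ)) := by
    rw [← hpoly]; exact hx
  rw [Set.smul_set_singleton, Set.mem_singleton_iff] at hmem
  have hxv : x = k • v := toR_inj (by rw [hmem, toR_nsmul])
  rw [hxv]
  exact sums_nsmul (mem_latPts_one (Finset.mem_singleton_self v)) k

lemma dP_one_of_le {V : Finset (ZL N)} (hne : V.Nonempty) (hva : VeryAmple V)
    (hvert : ∀ v ∈ V, toR v ∈ Set.extremePoints ℝ (poly V)) {dP mP : ℕ}
    (hdP : IsLeast (dSet V) dP) (hmP : mP ∈ upperBounds (mSet V dP)) (hle : mP ≤ dP) :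
    dP = 1 := by
  by_contra hd1
  have hd2 : 2 ≤ dP := by have := hdP.1.1; omega
  have hnot : dP - 1 ∉ dSet V := fun h => by have := hdP.2 h; omega
  rw [dSet, Set.mem_setOf_eq] at hnot
  push_neg at hnot
  obtain ⟨k, hk, hkne⟩ := hnot (by omega)
  have hkeq : k = dP - 1 := by
    by_contra hkd
    exact hkne (hdP.1.2 k (by omega))
  subst hkeq
  have hd1' : dP - 1 + 1 = dP := by omega
  rw [hd1'] at hkne
  have hsub : latPts V 1 + latPts V (dP - 1) ⊆ latPts V dP := by
    intro x hx
    obtain ⟨a, ha, b, hb, rfl⟩ := Set.mem_add.mp hx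
    have := latPts_add hne ha hb
    rwa [show 1 + (dP - 1) = dP by omega] at this
  obtain ⟨x, hx, hnx⟩ := Set.not_subset.mp (fun hs => hkne (Set.Subset.antisymm hs hsub))
  obtain ⟨u, hu⟩ := id hne
  obtain ⟨m, hm, hmem⟩ := sigma_le hva hvert hmP hx hu
  obtain ⟨w, hw, hws⟩ := sigma_extract hmem
  have hmdP : m ≤ dP := le_trans hm hle
  have hsums : Sums V dP x := by
    have h2 : Sums V m (∑ i, w i) := ⟨w, hw, rfl⟩
    have h3 : Sums V (dP - m) ((dP - m) • u) := sums_nsmul (mem_latPts_one hu) _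
    have htot := sums_add h2 h3
    have hval : (∑ i, w i) + (dP - m) • u = x := by
      rw [hws]
      have h5 : ((dP - m) : ℕ) • u = dP • u - m • u := by
        rw [eq_sub_iff_add_eq, ← add_nsmul]
        have h6 : dP - m + m = dP := by omega
        rw [h6]
      rw [h5]
      abel
    rw [hval] at htot
    exact sums_cast (by omega) htot
  exact hnx (sums_split hne (sums_cast (show dP = (dP - 1) + 1 by omega) hsums))

lemma normal_mP_le {V : Finset (ZL N)} (hne : V.Nonempty) (hn : NormalPoly V) {dP mP : ℕ}
    (hdP : IsLeast (dSet V) dP) (hmP : mP ∈ mSet V dP) : mP ≤ dP := by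
  have hd1 : dP = 1 := le_antisymm (hdP.2 (normal_dSet_one hne hn)) hdP.1.1
  subst hd1
  obtain ⟨x, hx, v, hv, hleast⟩ := hmP
  refine hleast.2 ⟨fun _ : Fin 1 => x, fun _ => hx, ?_⟩
  rw [Fin.sum_univ_one, one_nsmul]

end St9

/-- For a very ample lattice polytope `P` with `n` vertices,
`k_P ≤ (m_P − d_P)·n + 1`, with equality iff `P` is normal. -/
theorem stmt9 {N : ℕ} (V : Finset (ZL N)) (dP kP mP : ℕ)
    (hvert : ∀ v ∈ V, toR v ∈ Set.extremePoints ℝ (poly V))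
    (hva : VeryAmple V)
    (hdP : IsLeast (dSet V) dP)
    (hkP : IsLeast (kSet V) kP)
    (hmP : IsGreatest (mSet V dP) mP) :
    kP ≤ (mP - dP) * V.card + 1 ∧
      (kP = (mP - dP) * V.card + 1 ↔ NormalPoly V) := by
  obtain ⟨x₀, hx₀, v₀, hver₀, hls₀⟩ := hmP.1
  have hne : V.Nonempty := ⟨v₀, hver₀.1⟩
  have hn1 : 1 ≤ V.card := Finset.card_pos.mpr hne
  have hkP1 : 1 ≤ kP := hkP.1.1
  by_cases hle : mP ≤ dP
  · -- the normal case
    have hd1 : dP = 1 := St9.dP_one_of_le hne hva hvert hdP hmP.2 hle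
    have hnorm : NormalPoly V := St9.normal_of_d_one (hd1 ▸ hdP.1.2)
    have hkP_le : kP ≤ 1 := hkP.2 ⟨one_pos, fun k hk => hnorm k hk⟩
    have hmd0 : mP - dP = 0 := by omega
    constructor
    · rw [hmd0]; omega
    · constructor
      · intro _; exact hnorm
      · intro _; rw [hmd0]; omega
  · push_neg at hle
    set e := mP - dP with he_def
    have he1 : 1 ≤ e := by omega
    have he : dP + e = mP := by omega
    have hnotnorm : ¬ NormalPoly V := fun hn =>
      absurd (St9.normal_mP_le hne hn hdP hmP.1) (by omega)
    have hn2 : 2 ≤ V.card := by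
      rcases Nat.lt_or_ge V.card 2 with h | h
      · have hc1 : V.card = 1 := by omega
        exact absurd (St9.card_one_normal hc1) hnotnorm
      · exact h
    have hdPn : dP ≤ V.card - 1 := by
      have hmb := hdP.2 (St9.dSet_mem_max hne)
      have hmax : max 1 (V.card - 1) = V.card - 1 := by
        rw [max_eq_right]; omega
      rw [hmax] at hmb
      exact hmb
    have hprod : e * V.card = e * (V.card - 1) + e * 1 := by
      rw [← Nat.mul_add]
      congr 1
      omega
    have hpl : V.card - 1 ≤ e * (V.card - 1) := Nat.le_mul_of_pos_left _ (by omega)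
    have hkey : e * V.card ∈ kSet V := by
      refine ⟨Nat.mul_pos (by omega) (by omega), fun k hk => ?_⟩
      refine St9.kNormal_of_big hne hva hvert hdP.1.2 hmP.2 he hk (by omega)
    have hkPle : kP ≤ e * V.card := hkP.2 hkey
    constructor
    · omega
    · constructor
      · intro heq; exfalso; omega
      · intro hn; exact absurd hn hnotnorm
end

section
/- Let P be a lattice polytope. Suppose there exists r ≥ d_P such that for every lattice point x ∈ rP ∩ M and every vertex v of P, x − r·v can be written as a finite sum Σ_{i=1}^n (w_i − v) with w_i ∈ P ∩ M. Then P is very ample. -/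
open Finset Pointwise

lemma toR_add_nsmul {N : ℕ} (u v : ZL N) (n : ℕ) :
    toR (u + n • v) = toR u + (n : ℝ) • toR v := by
  funext i
  simp [toR]

lemma mem_dilate {N : ℕ} (V : Finset (ZL N)) (n : ℕ) (hn : 0 < n) (u v : ZL N)
    (hv : toR v ∈ poly V) (c : ℝ) (hc : 0 ≤ c) (hcn : c ≤ (n : ℝ))
    (p : Fin N → ℝ) (hp : p ∈ poly V)
    (hu : toR u = c • (p - toR v)) : u + n • v ∈ latPts V n := by
  have hn' : (0 : ℝ) < n := by exact_mod_cast hn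
  have hz : (c / n) • p + (1 - c / n) • toR v ∈ poly V := by
    refine (convex_convexHull ℝ _) hp hv (by positivity) ?_ (by ring)
    have : c / n ≤ 1 := by
      rw [div_le_one hn']; exact hcn
    linarith
  have : toR (u + n • v) = (n : ℝ) • ((c / n) • p + (1 - c / n) • toR v) := by
    rw [toR_add_nsmul, hu]
    rw [smul_add, smul_smul, smul_smul]
    rw [mul_div_cancel₀ _ (ne_of_gt hn')]
    rw [smul_sub]
    have : (n : ℝ) * (1 - c / n) = n - c := by field_simp
    rw [this, sub_smul]
    abel
  rw [latPts, Set.mem_setOf_eq, this]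
  exact Set.smul_mem_smul_set hz

lemma peel {N : ℕ} (V : Finset (ZL N)) (dP r : ℕ) (hdP : dP ∈ dSet V) (hr : dP ≤ r) :
    ∀ m, ∀ x ∈ latPts V (r + m), ∃ y ∈ latPts V r, ∃ f : Fin m → ZL N,
      (∀ i, f i ∈ latPts V 1) ∧ x = y + ∑ i, f i := by
  intro m
  induction m with
  | zero =>
    intro x hx
    exact ⟨x, hx, fun i => i.elim0, fun i => i.elim0, by simp⟩
  | succ m ih =>
    intro x hx
    have hk : r + m ≥ dP := le_trans hr (Nat.le_add_right r m)
    have heq := hdP.2 (r + m) hk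
    rw [show r + (m + 1) = (r + m) + 1 from rfl, heq] at hx
    obtain ⟨a, ha, y', hy', hsum⟩ := hx
    obtain ⟨y, hy, f, hf, hx'⟩ := ih y' hy'
    refine ⟨y, hy, Fin.cons a f, ?_, ?_⟩
    · intro i; exact Fin.cases ha (fun j => hf j) i
    · rw [Fin.sum_cons, ← hsum, hx']; abel

/-- If there is `r ≥ d_P` such that for every lattice point `x` of `rP` and
every vertex `v`, `x − r·v` is a finite sum of elements `w_i − v` with `w_i ∈ P ∩ M`,
then `P` is very ample. -/
theorem stmt11 {N : ℕ} (V : Finset (ZL N)) (dP r : ℕ)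
    (hdP : IsLeast (dSet V) dP) (hr : dP ≤ r)
    (h : ∀ x ∈ latPts V r, ∀ v, IsVertex V v →
      ∃ (m : ℕ) (w : Fin m → ZL N), (∀ i, w i ∈ latPts V 1) ∧
        x - r • v = ∑ i, (w i - v)) :
    VeryAmple V := by
  rintro v hv u ⟨c, hc, p, hp, hu⟩
  have hdP1 : 0 < dP := hdP.1.1
  set k := ⌈c⌉₊ with hkdef
  set n := r + k with hndef
  have hn0 : 0 < n := lt_of_lt_of_le (lt_of_lt_of_le hdP1 hr) (Nat.le_add_right _ _)
  have hvP : toR v ∈ poly V := subset_convexHull ℝ _ ⟨v, hv.1, rfl⟩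
  have hcn : c ≤ (n : ℝ) := by
    refine le_trans (Nat.le_ceil c) ?_
    exact_mod_cast Nat.le_add_left k r
  have hmem : u + n • v ∈ latPts V n :=
    mem_dilate V n hn0 u v hvP c hc hcn p hp hu
  obtain ⟨y, hy, f, hf, hx⟩ := peel V dP r hdP.1 hr k (u + n • v) hmem
  obtain ⟨m, w, hw, hyw⟩ := h y hy v hv
  refine ⟨m + k, Fin.append w f, ?_, ?_⟩
  · intro i
    refine Fin.addCases (fun j => ?_) (fun j => ?_) i
    · rw [Fin.append_left]; exact hw j
    · rw [Fin.append_right]; exact hf j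
  · rw [Fin.sum_univ_add]
    simp only [Fin.append_left, Fin.append_right]
    rw [← hyw]
    have h2 : ∑ j : Fin k, (f j - v) = (∑ j, f j) - k • v := by
      rw [Finset.sum_sub_distrib]
      simp [Finset.card_univ]
    rw [h2]
    calc u = (u + n • v) - n • v := by abel
      _ = y + ∑ j, f j - (r • v + k • v) := by rw [hx, hndef, add_nsmul]
      _ = y - r • v + (∑ j, f j - k • v) := by abel
end

section
/- Let P be a smooth d-dimensional lattice polytope. Then m_P ≤ d · d_P^d · Vol(P), where Vol(P) is the normalized volume of P. -/
open Finset Pointwise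

/-- `P` is smooth at each vertex `v`, witnessed by `w`: the points `w v i` are lattice
points of `P`, the differences `w v i − v` (the primitive edge direction generators at
`v`) form a `ℤ`-basis of the lattice, and they generate the tangent cone of `P` at `v`. -/
def SmoothPolyAt {d : ℕ} (V : Finset (ZL d)) (w : ZL d → Fin d → ZL d) (v : ZL d) : Prop :=
  (∀ i, w v i ∈ latPts V 1) ∧
  (∀ x : ZL d, ∃! a : Fin d → ℤ, x = ∑ i, a i • (w v i - v)) ∧
  (∀ p ∈ poly V, ∃ a : Fin d → ℝ, (∀ i, 0 ≤ a i) ∧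
    p = toR v + ∑ i, a i • (toR (w v i) - toR v))

/-!
Let `x ∈ d_P P ∩ M` and let `v` be a vertex. Smoothness at `v` writes `x / d_P = v + ∑ aᵢ (wᵢ - v)`
with `aᵢ ≥ 0`; as the `wᵢ - v` form a lattice basis, the integer coordinates of `x - d_P v` in it are
`d_P aᵢ`, so `x - d_P v` is a sum of `d_P ∑ aᵢ` edge vectors and `σ(x, d_P v) ≤ d_P ∑ aᵢ`.
Replacing the `i`-th edge of the unimodular corner simplex at `v` by `x / d_P - v` gives a simplex
inside `P` of normalized volume `aᵢ`, so `aᵢ ≤ Vol(P)`. Hence `m_P ≤ d d_P Vol(P) ≤ d d_P^d Vol(P)`.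
-/

open MeasureTheory Matrix

def cornerSimplex (d : ℕ) (c : ℝ) : Set (Fin d → ℝ) :=
  {x | (∀ i, 0 ≤ x i) ∧ ∑ i, x i ≤ c}

theorem cornerSimplex_eq_empty {d : ℕ} {c : ℝ} (hc : c < 0) : cornerSimplex d c = ∅ :=
  Set.eq_empty_iff_forall_notMem.2 fun _ hx =>
    (Finset.sum_nonneg fun i _ => hx.1 i).not_gt (hx.2.trans_lt hc)

theorem isClosed_cornerSimplex (d : ℕ) (c : ℝ) : IsClosed (cornerSimplex d c) := by
  simp only [cornerSimplex, Set.ofPred_and, Set.ofPred_forall]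
  exact (isClosed_iInter fun i => isClosed_le continuous_const (continuous_apply i)).inter
    (isClosed_le (continuous_finsetSum _ fun i _ => continuous_apply i) continuous_const)

theorem cons_mem_cornerSimplex_iff {d : ℕ} {c t : ℝ} {y : Fin d → ℝ} :
    (Fin.cons t y : Fin (d + 1) → ℝ) ∈ cornerSimplex (d + 1) c ↔
      0 ≤ t ∧ y ∈ cornerSimplex d (c - t) := by
  simp only [cornerSimplex, Set.mem_ofPred_eq, Fin.forall_fin_succ, Fin.cons_zero, Fin.cons_succ,
    Fin.sum_cons]
  constructor
  · rintro ⟨⟨ht, hy⟩, hs⟩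
    exact ⟨ht, hy, by linarith⟩
  · rintro ⟨ht, hy, hs⟩
    exact ⟨⟨ht, hy⟩, by linarith⟩

theorem volume_cornerSimplex_slice {d : ℕ} {c : ℝ}
    (hvol : ∀ c, 0 ≤ c → volume (cornerSimplex d c) = ENNReal.ofReal (c ^ d / d.factorial))
    (t : ℝ) :
    volume {y : Fin d → ℝ | (Fin.cons t y : Fin (d + 1) → ℝ) ∈ cornerSimplex (d + 1) c} =
      (Set.Icc 0 c).indicator (fun t => ENNReal.ofReal ((c - t) ^ d / d.factorial)) t := by
  by_cases ht : 0 ≤ t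
  · simp only [cons_mem_cornerSimplex_iff, ht, true_and, Set.ofPred_mem_eq]
    rcases le_or_gt t c with htc | htc
    · rw [Set.indicator_of_mem (Set.mem_Icc.2 ⟨ht, htc⟩), hvol _ (sub_nonneg.2 htc)]
    · simp [cornerSimplex_eq_empty (sub_neg.2 htc), htc.not_ge]
  · simp [cons_mem_cornerSimplex_iff, ht]

theorem integral_sub_pow_div_factorial (d : ℕ) (c : ℝ) :
    ∫ t in (0 : ℝ)..c, (c - t) ^ d / d.factorial = c ^ (d + 1) / (d + 1).factorial := by
  rw [intervalIntegral.integral_div, intervalIntegral.integral_comp_sub_left (· ^ d) c,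
    sub_self, sub_zero, integral_pow, Nat.factorial_succ]
  push_cast
  rw [zero_pow d.succ_ne_zero, sub_zero, div_div]

theorem volume_cornerSimplex (d : ℕ) {c : ℝ} (hc : 0 ≤ c) :
    volume (cornerSimplex d c) = ENNReal.ofReal (c ^ d / d.factorial) := by
  induction d generalizing c with
  | zero => simp [cornerSimplex, hc, volume_pi]
  | succ d ih =>
    let e := MeasurableEquiv.piFinSuccAbove (fun _ : Fin (d + 1) => ℝ) 0
    have he : MeasurePreserving e.symm (volume.prod volume) volume :=
      (volume_preserving_piFinSuccAbove (fun _ : Fin (d + 1) => ℝ) 0).symm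
    have hS := (isClosed_cornerSimplex (d + 1) c).measurableSet
    rw [← he.measure_preimage hS.nullMeasurableSet, Measure.prod_apply (e.symm.measurable hS)]
    have hslice (t : ℝ) : Prod.mk t ⁻¹' (e.symm ⁻¹' cornerSimplex (d + 1) c) =
        {y | (Fin.cons t y : Fin (d + 1) → ℝ) ∈ cornerSimplex (d + 1) c} := by
      ext y
      simp [e, Fin.consEquiv]
    simp only [hslice, volume_cornerSimplex_slice (fun _ hc => ih hc)]
    rw [lintegral_indicator measurableSet_Icc, ← ofReal_integral_eq_lintegral_ofReal,
      integral_Icc_eq_integral_Ioc, ← intervalIntegral.integral_of_le hc,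
      integral_sub_pow_div_factorial]
    · exact (by fun_prop : Continuous fun t : ℝ => (c - t) ^ d / d.factorial).integrableOn_Icc
    · filter_upwards [ae_restrict_mem measurableSet_Icc] with t ht
      have := sub_nonneg.2 ht.2
      positivity

theorem add_vecMul_mem_of_mem_cornerSimplex {d : ℕ} {C : Set (Fin d → ℝ)} (hC : Convex ℝ C)
    {v : Fin d → ℝ} (hv : v ∈ C) {M : Matrix (Fin d) (Fin d) ℝ} (hM : ∀ j, v + M j ∈ C)
    {y : Fin d → ℝ} (hy : y ∈ cornerSimplex d 1) : v + y ᵥ* M ∈ C := by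
  have hcomb : v + y ᵥ* M = ∑ o : Option (Fin d),
      Option.elim o (1 - ∑ j, y j) y • Option.elim o v (fun j => v + M j) := by
    simp only [Fintype.sum_option, Option.elim, vecMul_eq_sum, smul_add, Finset.sum_add_distrib,
      ← Finset.sum_smul, sub_smul, one_smul]
    abel
  rw [hcomb]
  refine hC.sum_mem (fun o _ => ?_) (by simp [Fintype.sum_option]) (fun o _ => ?_)
  · cases o with
    | none => exact sub_nonneg.2 hy.2
    | some j => exact hy.1 j
  · cases o with
    | none => exact hv
    | some j => exact hM j

theorem abs_det_le_factorial_mul_volume {d : ℕ} {C : Set (Fin d → ℝ)} (hC : Convex ℝ C)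
    (hCb : Bornology.IsBounded C) {v : Fin d → ℝ} (hv : v ∈ C) (M : Matrix (Fin d) (Fin d) ℝ)
    (hM : ∀ j, v + M j ∈ C) : |M.det| ≤ d.factorial * (volume C).toReal := by
  have hsub : (v + ·) '' (M.vecMulLinear '' cornerSimplex d 1) ⊆ C := by
    rintro - ⟨-, ⟨y, hy, rfl⟩, rfl⟩
    exact add_vecMul_mem_of_mem_cornerSimplex hC hv hM hy
  have hvol : volume ((v + ·) '' (M.vecMulLinear '' cornerSimplex d 1)) =
      ENNReal.ofReal (|M.det| / d.factorial) := by
    rw [Set.image_add_left, measure_preimage_add, ← mulVecLin_transpose, ← toLin'_apply',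
      Measure.addHaar_image_linearMap, LinearMap.det_toLin', det_transpose,
      volume_cornerSimplex d zero_le_one, ← ENNReal.ofReal_mul (abs_nonneg _), one_pow,
      mul_one_div]
  have := (ENNReal.ofReal_le_iff_le_toReal hCb.measure_lt_top.ne).1 (hvol ▸ measure_mono hsub)
  rw [div_le_iff₀ (by positivity)] at this
  linarith

theorem sum_mem_sigmaSet {N : ℕ} {V : Finset (ZL N)} {k : ℕ} {x v : ZL N} {ι : Type*}
    [Fintype ι] {u : ι → ZL N} (hu : ∀ i, u i ∈ latPts V 1) (n : ι → ℕ)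
    (hx : x - k • v = ∑ i, n i • (u i - v)) : ∑ i, n i ∈ sigmaSet V k x v := by
  let e : (Σ i, Fin (n i)) ≃ Fin (∑ i, n i) := Fintype.equivFinOfCardEq (by simp)
  refine ⟨fun j => u (e.symm j).1, fun j => hu _, ?_⟩
  rw [hx, e.symm.sum_comp (fun s => u s.1 - v), Fintype.sum_sigma]
  simp only [Finset.sum_const, Finset.card_univ, Fintype.card_fin]

theorem convex_poly {N : ℕ} (V : Finset (ZL N)) : Convex ℝ (poly V) :=
  convex_convexHull ℝ _

theorem isCompact_poly {N : ℕ} (V : Finset (ZL N)) : IsCompact (poly V) :=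
  (V.finite_toSet.image toR).isCompact_convexHull ℝ

def edgeMatrix {d : ℕ} (w : ZL d → Fin d → ZL d) (v : ZL d) : Matrix (Fin d) (Fin d) ℤ :=
  of fun i => w v i - v

theorem edgeMatrix_map_apply {d : ℕ} (w : ZL d → Fin d → ZL d) (v : ZL d) (i : Fin d) :
    (edgeMatrix w v).map (Int.cast : ℤ → ℝ) i = toR (w v i) - toR v := by
  ext j
  simp [edgeMatrix, toR]

namespace SmoothPolyAt

variable {d : ℕ} {V : Finset (ZL d)} {w : ZL d → Fin d → ZL d} {v : ZL d}

theorem isUnit_edgeMatrix (hs : SmoothPolyAt V w v) : IsUnit (edgeMatrix w v) :=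
  vecMul_surjective_iff_isUnit.1 fun x => by
    obtain ⟨a, ha, -⟩ := hs.2.1 x
    exact ⟨a, by rw [ha]; exact vecMul_eq_sum a _⟩

theorem abs_det_edgeMatrix_map (hs : SmoothPolyAt V w v) :
    |((edgeMatrix w v).map (Int.cast : ℤ → ℝ)).det| = 1 := by
  change |((Int.castRingHom ℝ).mapMatrix (edgeMatrix w v)).det| = 1
  rw [← RingHom.map_det, eq_intCast, ← Int.cast_abs,
    Int.isUnit_iff_abs_eq.1 ((isUnit_iff_isUnit_det _).1 hs.isUnit_edgeMatrix), Int.cast_one]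

theorem coord_le_factorial_mul_volume (hs : SmoothPolyAt V w v) (hv : toR v ∈ poly V)
    {p : Fin d → ℝ} (hp : p ∈ poly V) {a : Fin d → ℝ} (ha : ∀ i, 0 ≤ a i)
    (hpa : p = toR v + ∑ i, a i • (toR (w v i) - toR v)) (i : Fin d) :
    a i ≤ d.factorial * (volume (poly V)).toReal := by
  set W := (edgeMatrix w v).map (Int.cast : ℤ → ℝ)
  have hrow : p - toR v = ∑ j, a j • W j := by
    simp only [W, edgeMatrix_map_apply, hpa, add_sub_cancel_left]
  have hdet : |(W.updateRow i (p - toR v)).det| = a i := by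
    rw [hrow, det_updateRow_sum, smul_eq_mul, abs_mul, hs.abs_det_edgeMatrix_map, mul_one,
      abs_of_nonneg (ha i)]
  have hwP : ∀ j, toR (w v j) ∈ poly V := fun j => by
    simpa [latPts] using hs.1 j
  rw [← hdet]
  refine abs_det_le_factorial_mul_volume (convex_poly V) (isCompact_poly V).isBounded hv _
    fun j => ?_
  rcases eq_or_ne j i with rfl | hj
  · simpa using hp
  · simpa [updateRow_ne hj, W, edgeMatrix_map_apply] using hwP j

theorem intCast_coord_eq (hs : SmoothPolyAt V w v) {k : ℕ} {x : ZL d} {p : Fin d → ℝ}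
    (hxp : toR x = (k : ℝ) • p) {a : Fin d → ℝ} (hpa : p = toR v + ∑ i, a i • (toR (w v i) - toR v))
    {c : Fin d → ℤ} (hc : x - k • v = ∑ i, c i • (w v i - v)) (i : Fin d) :
    (c i : ℝ) = k * a i := by
  set W := (edgeMatrix w v).map (Int.cast : ℤ → ℝ)
  have hW : IsUnit W := hs.isUnit_edgeMatrix.map (Int.castRingHom ℝ).mapMatrix
  have hc' : toR (x - k • v) = (fun i => (c i : ℝ)) ᵥ* W := by
    rw [hc, vecMul_eq_sum]
    ext j
    simp [W, edgeMatrix_map_apply, toR]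
  have ha' : toR (x - k • v) = (fun i => (k : ℝ) * a i) ᵥ* W := by
    have : toR (x - k • v) = toR x - (k : ℝ) • toR v := by ext j; simp [toR]
    rw [this, hxp, hpa, vecMul_eq_sum]
    simp [W, edgeMatrix_map_apply, smul_add, Finset.smul_sum, smul_smul]
  exact congrFun (vecMul_injective_iff_isUnit.2 hW (hc'.symm.trans ha')) i

theorem exists_mem_sigmaSet_le (hs : SmoothPolyAt V w v) (hv : toR v ∈ poly V) {k : ℕ}
    {x : ZL d} (hx : x ∈ latPts V k) :
    ∃ m ∈ sigmaSet V k x v,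
      (m : ℝ) ≤ d * k * (d.factorial * (volume (poly V)).toReal) := by
  obtain ⟨p, hp, hxp⟩ := Set.mem_smul_set.1 hx
  obtain ⟨a, ha, hpa⟩ := hs.2.2 p hp
  obtain ⟨c, hc, -⟩ := hs.2.1 (x - k • v)
  have hca := hs.intCast_coord_eq hxp.symm hpa hc
  have hc0 (i : Fin d) : 0 ≤ c i := by
    exact_mod_cast (hca i).symm ▸ mul_nonneg k.cast_nonneg (ha i)
  refine ⟨∑ i, (c i).toNat, sum_mem_sigmaSet hs.1 _ ?_, ?_⟩
  · rw [hc]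
    exact Finset.sum_congr rfl fun i _ => by rw [← natCast_zsmul, Int.toNat_of_nonneg (hc0 i)]
  · calc ((∑ i, (c i).toNat : ℕ) : ℝ) = ∑ i, k * a i := by
          push_cast
          exact Finset.sum_congr rfl fun i _ => by
            rw [← hca]
            exact_mod_cast Int.toNat_of_nonneg (hc0 i)
      _ ≤ ∑ _i : Fin d, k * (d.factorial * (volume (poly V)).toReal) :=
          Finset.sum_le_sum fun i _ => by
            gcongr
            exact hs.coord_le_factorial_mul_volume hv hp ha hpa i
      _ = d * k * (d.factorial * (volume (poly V)).toReal) := by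
          simp [mul_assoc]

end SmoothPolyAt

theorem stmt12_general {d : ℕ} (V : Finset (ZL d)) (w : ZL d → Fin d → ZL d)
    (hsmooth : ∀ v, IsVertex V v → SmoothPolyAt V w v)
    (dP mP : ℕ)
    (hmP : IsGreatest (mSet V dP) mP) :
    (mP : ℝ) ≤ d * dP ^ d *
      (d.factorial * (MeasureTheory.volume (poly V)).toReal) := by
  obtain ⟨⟨x, hx, v, hv, hσ⟩, -⟩ := hmP
  obtain ⟨m, hm, hmle⟩ :=
    (hsmooth v hv).exists_mem_sigmaSet_le (extremePoints_subset hv.2) hx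
  have hdP : (d * dP : ℝ) ≤ d * dP ^ d := by
    rcases Nat.eq_zero_or_pos d with rfl | hd
    · simp
    · exact_mod_cast Nat.mul_le_mul_left d (Nat.le_self_pow hd.ne' dP)
  calc (mP : ℝ) ≤ m := by exact_mod_cast hσ.2 hm
    _ ≤ _ := hmle
    _ ≤ _ := by gcongr

/-- For a smooth `d`-dimensional lattice polytope `P`,
`m_P ≤ d · d_P^d · Vol(P)`, where `Vol(P) = d! ·` (Euclidean volume of `P`). -/
theorem stmt12 {d : ℕ} (V : Finset (ZL d)) (w : ZL d → Fin d → ZL d)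
    (hdim : Module.finrank ℝ ↥(vectorSpan ℝ (poly V)) = d)
    (hsmooth : ∀ v, IsVertex V v → SmoothPolyAt V w v)
    (dP mP : ℕ)
    (hdP : IsLeast (dSet V) dP)
    (hmP : IsGreatest (mSet V dP) mP) :
    (mP : ℝ) ≤ d * dP ^ d *
      (d.factorial * (MeasureTheory.volume (poly V)).toReal) :=
  stmt12_general V w hsmooth dP mP hmP
end
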